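/- The descent set partition of semistandard Young tableaux by standardization: for a fixed standard Young tableau T_0 of shape λ ⊢ n with entries in [M] variables available, the sum of monomials X^T over all semistandard Young tableaux T of shape λ whose standardization equals T_0 is exactly F_{Des(T_0)}(X). -/
import Mathlib


open MvPolynomial Finset Equiv

attribute [local instance] Classical.propDecidable

noncomputable section

/-! ### Type A fundamental quasisymmetric functions -/

/-- A weakly increasing sequence of length `n` in `[M]` with strict increases at
positions in `I` (positions are 1-indexed: `k ∈ I` forces strictness between the
`k`-th and `(k+1)`-st entries, i.e. between 0-indexed entries `k-1` and `k`). -/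
def seqOK (n M : ℕ) (I : Finset ℕ) (g : Fin n → Fin M) : Prop :=
  ∀ i j : Fin n, (i : ℕ) + 1 = (j : ℕ) → (g i ≤ g j ∧ ((j : ℕ) ∈ I → g i < g j))

/-- Gessel's fundamental quasisymmetric function `F_I` on the alphabet `x_1,…,x_M`. -/
def Fqsym (M n : ℕ) (I : Finset ℕ) : MvPolynomial (Fin M) ℤ :=
  ∑ g ∈ Finset.univ.filter (seqOK n M I), ∏ i, X (g i)

/-- Descent set of a permutation written as the word `π(1) … π(n)`:
`k` is a descent iff `π(k) > π(k+1)` (1-indexed values, `k ∈ [1, n-1]`). -/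
def desPerm {n : ℕ} (α : Equiv.Perm (Fin n)) : Finset ℕ :=
  (Finset.range n).filter fun k =>
    ∃ i j : Fin n, (i : ℕ) + 1 = (j : ℕ) ∧ (j : ℕ) = k ∧ α j < α i

/-- `γ` is a shuffle of the word `α` with the word `β` shifted up by `n`. -/
def IsShuffle {n m : ℕ} (α : Equiv.Perm (Fin n)) (β : Equiv.Perm (Fin m))
    (γ : Equiv.Perm (Fin (n + m))) : Prop :=
  ∃ φ : Fin n → Fin (n + m), ∃ ψ : Fin m → Fin (n + m),
    (∀ a b : Fin n, a < b → φ a < φ b) ∧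
    (∀ a b : Fin m, a < b → ψ a < ψ b) ∧
    (∀ i, (γ (φ i) : ℕ) = (α i : ℕ)) ∧
    (∀ j, (γ (ψ j) : ℕ) = n + (β j : ℕ)) ∧
    (∀ k, (∃ i, φ i = k) ∨ (∃ j, ψ j = k))

/-! ### Young tableaux -/

/-- Semistandard Young tableau of shape `μ` with entries in `Fin M`. -/
def IsSSYT {μ : YoungDiagram} {M : ℕ} (f : ↥μ.cells → Fin M) : Prop :=
  (∀ c d : ↥μ.cells, (c : ℕ × ℕ).1 = (d : ℕ × ℕ).1 → (c : ℕ × ℕ).2 ≤ (d : ℕ × ℕ).2 →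
      f c ≤ f d) ∧
  (∀ c d : ↥μ.cells, (c : ℕ × ℕ).2 = (d : ℕ × ℕ).2 → (c : ℕ × ℕ).1 < (d : ℕ × ℕ).1 →
      f c < f d)

/-- The Schur polynomial in `M` variables: generating function of SSYT of shape `μ`. -/
def schurPoly (M : ℕ) (μ : YoungDiagram) : MvPolynomial (Fin M) ℤ :=
  ∑ f ∈ Finset.univ.filter (fun f : ↥μ.cells → Fin M => IsSSYT f), ∏ c, X (f c)

/-- Standard Young tableau of shape `μ` (with `μ.card = n`), labels `Fin n`. -/
def IsSYT {μ : YoungDiagram} {n : ℕ} (f : ↥μ.cells → Fin n) : Prop :=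
  Function.Bijective f ∧
  (∀ c d : ↥μ.cells, (c : ℕ × ℕ).1 = (d : ℕ × ℕ).1 → (c : ℕ × ℕ).2 < (d : ℕ × ℕ).2 →
      f c < f d) ∧
  (∀ c d : ↥μ.cells, (c : ℕ × ℕ).2 = (d : ℕ × ℕ).2 → (c : ℕ × ℕ).1 < (d : ℕ × ℕ).1 →
      f c < f d)

/-- Descent set of a standard Young tableau: `k` is a descent iff the label `k+1`
(1-indexed) lies in a strictly lower row than the label `k`. -/
def desSYT {μ : YoungDiagram} {n : ℕ} (f : ↥μ.cells → Fin n) : Finset ℕ :=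
  (Finset.range n).filter fun k =>
    ∃ c d : ↥μ.cells, (f c : ℕ) + 1 = k ∧ (f d : ℕ) = k ∧ (c : ℕ × ℕ).1 < (d : ℕ × ℕ).1

/-- `g` is the standardization of the semistandard tableau `f` (ties among equal
entries broken from left to right, i.e. by column). -/
def Standardizes {μ : YoungDiagram} {M n : ℕ} (f : ↥μ.cells → Fin M)
    (g : ↥μ.cells → Fin n) : Prop :=
  ∀ c d : ↥μ.cells,
    g c < g d ↔ (f c < f d ∨ (f c = f d ∧ (c : ℕ × ℕ).2 < (d : ℕ × ℕ).2))

/-! ### Weak composition quasisymmetric functions -/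

/-- Expansion of a weak composition into "slots": each zero part contributes one
slot of exponent `0`, each positive part `s` contributes `s` slots of exponent `1`. -/
def wcSlots (α : List ℕ) : List ℕ :=
  α.flatMap fun s => if s = 0 then [0] else List.replicate s 1

def wcDesAux : List ℕ → ℕ → List ℕ
  | [], _ => []
  | s :: rest, c => if s = 0 then wcDesAux rest (c + 1) else (c + s) :: wcDesAux rest (c + s)

/-- The descent set `D(α)` of a weak composition `α`. -/
def wcDes (α : List ℕ) : Finset ℕ := (wcDesAux α 0).toFinset

/-- The weak composition fundamental quasisymmetric function `F̃_α` on `x_1,…,x_M`. -/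
def wcF (M : ℕ) (α : List ℕ) : MvPolynomial (Fin M) ℤ :=
  ∑ g ∈ Finset.univ.filter (seqOK (wcSlots α).length M (wcDes α)),
    ∏ t : Fin (wcSlots α).length, X (g t) ^ (wcSlots α).get t

/-! ### Coloured permutations -/

/-- Order key for a coloured letter: overlined letters `(true, v)` come first
(ordered by value), then non-overlined letters `(false, v)`. -/
def cOrd (L : ℕ) (x : Bool × ℕ) : ℕ := if x.1 then x.2 else 2 * L + x.2

/-- Generating function `Γ(π)` of `P_π`-partitions for a coloured permutation,
given as a word `w` of letters `(overlined?, value)`. -/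
def GammaC (M : ℕ) (w : List (Bool × ℕ)) : MvPolynomial (Fin M) ℤ :=
  ∑ f ∈ Finset.univ.filter (fun f : Fin w.length → Fin M =>
      ∀ i j : Fin w.length, (i : ℕ) + 1 = (j : ℕ) →
        (f i ≤ f j ∧ (cOrd w.length (w.get j) < cOrd w.length (w.get i) → f i < f j))),
    ∏ i, X (f i) ^ (if (w.get i).1 then 0 else 1)

/-- The weak composition `comp(π)` of a coloured permutation word: overlined letters
give zero parts, maximal increasing runs of non-overlined letters give positive parts. -/
def compC : List (Bool × ℕ) → List ℕ
  | [] => []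
  | (true, _) :: rest => 0 :: compC rest
  | (false, v) :: rest =>
    match rest with
    | (false, w) :: _ =>
      if v < w then
        match compC rest with
        | [] => [1]
        | s :: t => (s + 1) :: t
      else 1 :: compC rest
    | _ => 1 :: compC rest

/-! ### Standard and semistandard (p)-tableaux -/

/-- Standard `(p)`-tableau of shape `((p), μ)` with `μ.card = n`: a strictly
increasing row `a` of length `p` and a standard filling `f` of `μ`, jointly
bijective onto `[n+p]`. -/
def IsSBT {μ : YoungDiagram} {p n : ℕ} (a : Fin p → Fin (n + p))
    (f : ↥μ.cells → Fin (n + p)) : Prop :=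
  (∀ i j : Fin p, i < j → a i < a j) ∧
  Function.Injective f ∧
  (∀ (i : Fin p) (c : ↥μ.cells), a i ≠ f c) ∧
  (∀ c d : ↥μ.cells, (c : ℕ × ℕ).1 = (d : ℕ × ℕ).1 → (c : ℕ × ℕ).2 < (d : ℕ × ℕ).2 →
      f c < f d) ∧
  (∀ c d : ↥μ.cells, (c : ℕ × ℕ).2 = (d : ℕ × ℕ).2 → (c : ℕ × ℕ).1 < (d : ℕ × ℕ).1 →
      f c < f d)

/-- Row of the cell of `T⁺` labelled `t` (junk value `0` if `t` labels `T⁻`). -/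
def rowOfLabel {μ : YoungDiagram} {N : ℕ} (f : ↥μ.cells → Fin N) (t : ℕ) : ℕ :=
  ∑ c ∈ Finset.univ.filter (fun c : ↥μ.cells => (f c : ℕ) = t), (c : ℕ × ℕ).1

/-- Slot list of a standard `(p)`-tableau: for each label `t = 0,…,n+p-1`, `none`
if `t` lies in `T⁻`, and `some r` if `t` lies in row `r` of `T⁺`. -/
def slotsSBT {μ : YoungDiagram} {p n : ℕ} (a : Fin p → Fin (n + p))
    (f : ↥μ.cells → Fin (n + p)) : List (Option ℕ) :=
  (List.range (n + p)).map fun t =>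
    if ∃ i : Fin p, (a i : ℕ) = t then none else some (rowOfLabel f t)

/-- Parse a slot list into a weak composition: `none` slots give zero parts,
maximal runs of `some` slots with no descent (no row increase) give positive parts. -/
def compOfSlots : List (Option ℕ) → List ℕ
  | [] => []
  | none :: rest => 0 :: compOfSlots rest
  | some r :: rest =>
    match rest with
    | some r' :: _ =>
      if r < r' then 1 :: compOfSlots rest
      else
        match compOfSlots rest with
        | [] => [1]
        | s :: t => (s + 1) :: t
    | _ => 1 :: compOfSlots rest

/-- The weak composition `comp(T)` of a standard `(p)`-tableau `T = (a, f)`. -/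
def compSBT {μ : YoungDiagram} {p n : ℕ} (a : Fin p → Fin (n + p))
    (f : ↥μ.cells → Fin (n + p)) : List ℕ :=
  compOfSlots (slotsSBT a f)

/-- `(a, b)` (standard) is the standardization of the semistandard `(p)`-tableau
`(g, f)`: order is preserved, ties broken by relabelling `T⁻` first, and within
each tableau from left to right. -/
def StdSBT {μ : YoungDiagram} {M p n : ℕ} (g : Fin p → Fin M) (f : ↥μ.cells → Fin M)
    (a : Fin p → Fin (n + p)) (b : ↥μ.cells → Fin (n + p)) : Prop :=
  (∀ i j : Fin p, a i < a j ↔ (g i < g j ∨ (g i = g j ∧ i < j))) ∧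
  (∀ c d : ↥μ.cells, b c < b d ↔ (f c < f d ∨ (f c = f d ∧ (c : ℕ × ℕ).2 < (d : ℕ × ℕ).2))) ∧
  (∀ (i : Fin p) (c : ↥μ.cells), a i < b c ↔ g i ≤ f c) ∧
  (∀ (c : ↥μ.cells) (i : Fin p), b c < a i ↔ f c < g i)

/-! ### Chow's type B quasisymmetric functions and signed permutations -/

/-- Type B admissible sequence: `0 = i_0 ≤ i_1 ≤ … ≤ i_n` with `i_j < i_{j+1}`
for `j ∈ I` (the alphabet is `x_0, x_1, …, x_M`, i.e. `Fin (M+1)`). -/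
def seqOKB (n : ℕ) {M : ℕ} (I : Finset ℕ) (g : Fin n → Fin (M + 1)) : Prop :=
  (∀ i j : Fin n, (i : ℕ) + 1 = (j : ℕ) → (g i ≤ g j ∧ ((j : ℕ) ∈ I → g i < g j))) ∧
  (∀ j : Fin n, (j : ℕ) = 0 → (0 : ℕ) ∈ I → (0 : Fin (M + 1)) < g j)

/-- Chow's type B fundamental quasisymmetric function `F^B_I`, with variables
embedded into an ambient variable set via `v`. -/
def FB (R : Type*) [CommRing R] {σ : Type*} (M n : ℕ) (I : Finset ℕ)
    (v : Fin (M + 1) → σ) : MvPolynomial σ R :=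
  ∑ g ∈ Finset.univ.filter (seqOKB n I), ∏ i, X (v (g i))

/-- A signed permutation of `[n]`: an (unsigned) permutation together with signs. -/
abbrev SPerm (n : ℕ) := Equiv.Perm (Fin n) × (Fin n → Bool)

/-- The value `π(i) ∈ ±[n]` of a signed permutation at position `i`. -/
def sval {n : ℕ} (π : SPerm n) (i : Fin n) : ℤ :=
  if π.2 i then -((π.1 i : ℤ) + 1) else (π.1 i : ℤ) + 1

/-- Type B descent set: `0` is a descent iff `π(1) < 0`; `k ≥ 1` is a descent iff
`π(k) > π(k+1)`. -/
def desB {n : ℕ} (π : SPerm n) : Finset ℕ :=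
  (Finset.range n).filter fun k =>
    (k = 0 ∧ ∃ j : Fin n, (j : ℕ) = 0 ∧ sval π j < 0) ∨
    (∃ i j : Fin n, (i : ℕ) + 1 = (j : ℕ) ∧ (j : ℕ) = k ∧ sval π j < sval π i)

/-- Total colour: the number of negative values. -/
def tcB {n : ℕ} (π : SPerm n) : ℕ := (Finset.univ.filter fun i => π.2 i).card

/-- The inverse of a signed permutation. -/
def invB {n : ℕ} (π : SPerm n) : SPerm n := (π.1⁻¹, fun j => π.2 (π.1⁻¹ j))

/-- Signed shuffle: `γ` is obtained by interleaving `α` with `β` whose letters'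
absolute values are shifted by `n` (signs preserved). -/
def IsShuffleB {n m : ℕ} (α : SPerm n) (β : SPerm m) (γ : SPerm (n + m)) : Prop :=
  ∃ φ : Fin n → Fin (n + m), ∃ ψ : Fin m → Fin (n + m),
    (∀ a b : Fin n, a < b → φ a < φ b) ∧
    (∀ a b : Fin m, a < b → ψ a < ψ b) ∧
    (∀ i, sval γ (φ i) = sval α i) ∧
    (∀ j, sval γ (ψ j) = sval β j + (if 0 < sval β j then (n : ℤ) else -(n : ℤ))) ∧
    (∀ k, (∃ i, φ i = k) ∨ (∃ j, ψ j = k))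

/-! ### Domino tableaux -/

/-- Two cells are adjacent (horizontally or vertically). -/
def AdjCell (c d : ℕ × ℕ) : Prop :=
  (c.1 = d.1 ∧ (c.2 + 1 = d.2 ∨ d.2 + 1 = c.2)) ∨
  (c.2 = d.2 ∧ (c.1 + 1 = d.1 ∨ d.1 + 1 = c.1))

/-- A perfect matching of the cells of `μ` into dominoes. -/
def IsPairing {μ : YoungDiagram} (m : ↥μ.cells → ↥μ.cells) : Prop :=
  ∀ c, m c ≠ c ∧ m (m c) = c ∧ AdjCell (c : ℕ × ℕ) (m c : ℕ × ℕ)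

/-- Standard domino tableau of shape `μ` (with `μ.card = 2n`): a domino tiling
together with a bijective labelling of the dominoes by `[n]`, weakly increasing
along rows and columns. -/
def IsSDT {μ : YoungDiagram} {n : ℕ}
    (T : (↥μ.cells → Fin n) × (↥μ.cells → ↥μ.cells)) : Prop :=
  IsPairing T.2 ∧ (∀ c, T.1 (T.2 c) = T.1 c) ∧
  (∀ c d, T.1 c = T.1 d → d = c ∨ d = T.2 c) ∧
  (∀ c d : ↥μ.cells, (c : ℕ × ℕ).1 = (d : ℕ × ℕ).1 → (c : ℕ × ℕ).2 ≤ (d : ℕ × ℕ).2 →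
      T.1 c ≤ T.1 d) ∧
  (∀ c d : ↥μ.cells, (c : ℕ × ℕ).2 = (d : ℕ × ℕ).2 → (c : ℕ × ℕ).1 ≤ (d : ℕ × ℕ).1 →
      T.1 c ≤ T.1 d)

/-- Descent set of a standard domino tableau: `0` is a descent iff the domino
labelled `1` is vertical; `k ≥ 1` is a descent iff the domino labelled `k+1` lies
strictly below the domino labelled `k`. -/
def desSDT {μ : YoungDiagram} {n : ℕ}
    (T : (↥μ.cells → Fin n) × (↥μ.cells → ↥μ.cells)) : Finset ℕ :=
  (Finset.range n).filter fun k =>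
    (k = 0 ∧ ∃ c : ↥μ.cells, (T.1 c : ℕ) = 0 ∧ ((T.2 c : ℕ × ℕ).2 = (c : ℕ × ℕ).2)) ∨
    (∃ i j : Fin n, (i : ℕ) + 1 = (j : ℕ) ∧ (j : ℕ) = k ∧
      ∀ c d : ↥μ.cells, T.1 c = i → T.1 d = j → (c : ℕ × ℕ).1 < (d : ℕ × ℕ).1)

/-- Number of vertical dominoes of a tiling. -/
def nvert {μ : YoungDiagram} (m : ↥μ.cells → ↥μ.cells) : ℕ :=
  (Finset.univ.filter fun c : ↥μ.cells => (m c : ℕ × ℕ).2 = (c : ℕ × ℕ).2).card / 2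

/-- Semistandard domino tableau with labels in `{0, 1, …, M}`: weakly increasing
along rows, strictly increasing down columns except inside a vertical domino, and
a vertical top-leftmost domino cannot be labelled `0`. -/
def IsSSDT {μ : YoungDiagram} {M : ℕ}
    (T : (↥μ.cells → Fin (M + 1)) × (↥μ.cells → ↥μ.cells)) : Prop :=
  IsPairing T.2 ∧ (∀ c, T.1 (T.2 c) = T.1 c) ∧
  (∀ c d : ↥μ.cells, (c : ℕ × ℕ).1 = (d : ℕ × ℕ).1 → (c : ℕ × ℕ).2 ≤ (d : ℕ × ℕ).2 →
      T.1 c ≤ T.1 d) ∧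
  (∀ c d : ↥μ.cells, (c : ℕ × ℕ).2 = (d : ℕ × ℕ).2 → (c : ℕ × ℕ).1 < (d : ℕ × ℕ).1 →
      (T.1 c < T.1 d ∨ d = T.2 c)) ∧
  (∀ c : ↥μ.cells, (c : ℕ × ℕ) = (0, 0) → (T.2 c : ℕ × ℕ).2 = (c : ℕ × ℕ).2 → T.1 c ≠ 0)

/-- The monomial `X^T` of a semistandard domino tableau: one variable per domino
(choosing the cell of smaller coordinate sum as representative). -/
def dominoMonomial {μ : YoungDiagram} {M : ℕ}
    (T : (↥μ.cells → Fin (M + 1)) × (↥μ.cells → ↥μ.cells)) :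
    MvPolynomial (Fin (M + 1)) ℤ :=
  ∏ c ∈ Finset.univ.filter (fun c : ↥μ.cells =>
      (c : ℕ × ℕ).1 + (c : ℕ × ℕ).2 < (T.2 c : ℕ × ℕ).1 + (T.2 c : ℕ × ℕ).2),
    X (T.1 c)

/-- `q^{sp}` where `sp = v/2` is half the number of vertical dominoes, as an
element of the group algebra `ℤ[q^{ℚ}]`. -/
def qspin (v : ℕ) : AddMonoidAlgebra ℤ ℚ := AddMonoidAlgebra.single ((v : ℚ) / 2) 1

/-- The domino function `G_λ(X; q)`, with `q^{1/2}`-powers recorded in `ℤ[q^ℚ]`. -/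
def Gdom (M : ℕ) (μ : YoungDiagram) :
    MvPolynomial (Fin (M + 1)) (AddMonoidAlgebra ℤ ℚ) :=
  ∑ T ∈ Finset.univ.filter
      (fun T : (↥μ.cells → Fin (M + 1)) × (↥μ.cells → ↥μ.cells) => IsSSDT T),
    C (qspin (nvert T.2)) *
      ∏ c ∈ Finset.univ.filter (fun c : ↥μ.cells =>
          (c : ℕ × ℕ).1 + (c : ℕ × ℕ).2 < (T.2 c : ℕ × ℕ).1 + (T.2 c : ℕ × ℕ).2),
        X (T.1 c)

/-- The domino function `G_λ(X; 1)` at `q = 1`. -/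
def Gdom1 (M : ℕ) (μ : YoungDiagram) : MvPolynomial (Fin (M + 1)) ℤ :=
  ∑ T ∈ Finset.univ.filter
      (fun T : (↥μ.cells → Fin (M + 1)) × (↥μ.cells → ↥μ.cells) => IsSSDT T),
    dominoMonomial T

/-! ### 2-quotient -/

/-- The Young diagram with row lengths `ρ` (cut off at bounds `R, C`); the
definition forces lower-set-ness. -/
def diagramOf (ρ : ℕ → ℕ) (R C : ℕ) : YoungDiagram where
  cells := ((Finset.range R) ×ˢ (Finset.range C)).filter fun c => ∀ i ≤ c.1, c.2 < ρ i
  isLowerSet := by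
    intro a b hba ha
    simp only [Finset.coe_filter, Set.mem_setOf_eq, Finset.mem_product,
      Finset.mem_range] at *
    exact ⟨⟨lt_of_le_of_lt hba.1 ha.1.1, lt_of_le_of_lt hba.2 ha.1.2⟩,
      fun i hi => lt_of_le_of_lt hba.2 (ha.2 i (le_trans hi hba.1))⟩

/-- The pair of row-length functions of the 2-quotient of `μ` (a partition of `2n`),
computed via beta-numbers with `r = 2n + 2` beads: even beta-numbers give the first
component `λ⁻`, odd beta-numbers the second component `λ⁺`. -/
def quotientRows (μ : YoungDiagram) (n : ℕ) : (ℕ → ℕ) × (ℕ → ℕ) :=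
  let r := 2 * n + 2
  let bs := (List.range r).map fun i => μ.rowLen i + (r - 1 - i)
  let od := (bs.filter fun x => x % 2 = 1).insertionSort (· ≥ ·)
  let ev := (bs.filter fun x => x % 2 = 0).insertionSort (· ≥ ·)
  (fun j => ev.getD j 0 / 2 - (ev.length - 1 - j),
   fun j => (od.getD j 0 - 1) / 2 - (od.length - 1 - j))

/-- First component `λ⁻` of the 2-quotient of `μ ∈ P⁰(n)`. -/
def twoQuotMinus (μ : YoungDiagram) (n : ℕ) : YoungDiagram :=
  diagramOf (quotientRows μ n).1 (2 * n + 2) (4 * n + 4)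

/-- Second component `λ⁺` of the 2-quotient of `μ ∈ P⁰(n)`. -/
def twoQuotPlus (μ : YoungDiagram) (n : ℕ) : YoungDiagram :=
  diagramOf (quotientRows μ n).2 (2 * n + 2) (4 * n + 4)

/-- The Schur polynomial on the alphabet `X^* = {x_1, …, x_M}` (no `x_0`),
inside the ring of polynomials on `{x_0, …, x_M}`. -/
def schurStarPoly (M : ℕ) (μ : YoungDiagram) : MvPolynomial (Fin (M + 1)) ℤ :=
  ∑ f ∈ Finset.univ.filter
      (fun f : ↥μ.cells → Fin (M + 1) => IsSSYT f ∧ ∀ c, f c ≠ 0),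
    ∏ c, X (f c)

end


/-! ### Auxiliary lemmas for the proof -/

noncomputable section AuxStd

variable {lam : YoungDiagram} {M n : ℕ}

/-- The equiv `cells ≃ Fin n` from a standard tableau. -/
def sytEquiv {T0 : ↥lam.cells → Fin n} (hT0 : IsSYT T0) : ↥lam.cells ≃ Fin n :=
  Equiv.ofBijective T0 hT0.1

lemma sytEquiv_apply {T0 : ↥lam.cells → Fin n} (hT0 : IsSYT T0) (c : ↥lam.cells) :
    sytEquiv hT0 c = T0 c := rfl

lemma sytEquiv_symm_T0 {T0 : ↥lam.cells → Fin n} (hT0 : IsSYT T0) (c : ↥lam.cells) :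
    (sytEquiv hT0).symm (T0 c) = c := (sytEquiv hT0).symm_apply_apply c

lemma T0_sytEquiv_symm {T0 : ↥lam.cells → Fin n} (hT0 : IsSYT T0) (i : Fin n) :
    T0 ((sytEquiv hT0).symm i) = i := (sytEquiv hT0).apply_symm_apply i

/-- SYT geometry: a cell weakly above-left gets a smaller label. -/
lemma syt_lt_of_le_le {T0 : ↥lam.cells → Fin n} (hT0 : IsSYT T0)
    (c d : ↥lam.cells) (hr : (d : ℕ × ℕ).1 ≤ (c : ℕ × ℕ).1)
    (hc : (d : ℕ × ℕ).2 ≤ (c : ℕ × ℕ).2) (hne : d ≠ c) : T0 d < T0 c := by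
  have hmidmem : ((d : ℕ × ℕ).1, (c : ℕ × ℕ).2) ∈ lam :=
    lam.up_left_mem hr le_rfl (by rw [Prod.mk.eta]; exact c.prop)
  set m : ↥lam.cells := ⟨((d : ℕ × ℕ).1, (c : ℕ × ℕ).2), hmidmem⟩ with hm
  have h1 : T0 d ≤ T0 m := by
    rcases lt_or_eq_of_le hc with h | h
    · exact le_of_lt (hT0.2.1 d m rfl h)
    · have : d = m := Subtype.ext (Prod.ext rfl h)
      rw [this]
  have h2 : T0 m ≤ T0 c := by
    rcases lt_or_eq_of_le hr with h | h
    · exact le_of_lt (hT0.2.2 m c rfl h)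
    · have : m = c := Subtype.ext (Prod.ext h rfl)
      rw [this]
  rcases lt_or_eq_of_le h1 with h | h
  · exact lt_of_lt_of_le h h2
  rcases lt_or_eq_of_le h2 with h' | h'
  · exact lt_of_le_of_lt h1 h'
  exfalso
  apply hne
  have hdm : d = m := hT0.1.1 h
  have hmc : m = c := hT0.1.1 h'
  exact hdm.trans hmc

/-- SSYT: strictly lower row, weakly larger column forces a strictly larger entry. -/
lemma ssyt_lt {f : ↥lam.cells → Fin M} (hf : IsSSYT f) (c d : ↥lam.cells)
    (hr : (c : ℕ × ℕ).1 < (d : ℕ × ℕ).1) (hc : (c : ℕ × ℕ).2 ≤ (d : ℕ × ℕ).2) :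
    f c < f d := by
  have hmidmem : ((d : ℕ × ℕ).1, (c : ℕ × ℕ).2) ∈ lam :=
    lam.up_left_mem le_rfl hc (by rw [Prod.mk.eta]; exact d.prop)
  set m : ↥lam.cells := ⟨((d : ℕ × ℕ).1, (c : ℕ × ℕ).2), hmidmem⟩ with hm
  exact lt_of_lt_of_le (hf.2 c m rfl hr) (hf.1 m d rfl hc)

/-- Weak monotonicity of admissible sequences. -/
lemma seqOK_mono {I : Finset ℕ} {g : Fin n → Fin M} (hg : seqOK n M I g) :
    ∀ i j : Fin n, i ≤ j → g i ≤ g j := by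
  have key : ∀ b, ∀ (a : ℕ) (ha : a < n) (hb : b < n), a ≤ b →
      g ⟨a, ha⟩ ≤ g ⟨b, hb⟩ := by
    intro b
    induction b with
    | zero =>
      intro a ha hb hab
      obtain rfl := Nat.le_zero.mp hab
      exact le_rfl
    | succ b ih =>
      intro a ha hb hab
      rcases Nat.lt_or_ge a (b + 1) with h | h
      · have hb' : b < n := Nat.lt_of_succ_lt hb
        exact le_trans (ih a ha hb' (Nat.lt_succ_iff.mp h))
          ((hg ⟨b, hb'⟩ ⟨b + 1, hb⟩ rfl).1)
      · obtain rfl : a = b + 1 := le_antisymm hab h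
        exact le_rfl
  intro i j hij
  have := key (j : ℕ) (i : ℕ) i.isLt j.isLt hij
  simpa using this

/-- Rows weakly decrease along a run of equal entries. -/
lemma row_le_of_eq {T0 : ↥lam.cells → Fin n} (hT0 : IsSYT T0) {g : Fin n → Fin M}
    (hg : seqOK n M (desSYT T0) g) (c d : ↥lam.cells) (hle : T0 c ≤ T0 d)
    (heq : g (T0 c) = g (T0 d)) : (d : ℕ × ℕ).1 ≤ (c : ℕ × ℕ).1 := by
  have key : ∀ b (hb : b < n), (T0 c : ℕ) ≤ b → b ≤ (T0 d : ℕ) →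
      (((sytEquiv hT0).symm ⟨b, hb⟩ : ↥lam.cells) : ℕ × ℕ).1 ≤ (c : ℕ × ℕ).1 := by
    intro b
    induction b with
    | zero =>
      intro hb hab hbd
      have h1 : (⟨0, hb⟩ : Fin n) = T0 c := by
        rw [Fin.ext_iff, Fin.val_mk]; omega
      rw [h1, sytEquiv_symm_T0]
    | succ b ih =>
      intro hb hab hbd
      rcases Nat.lt_or_ge (T0 c : ℕ) (b + 1) with h | h
      · have hb' : b < n := Nat.lt_of_succ_lt hb
        have hab' : (T0 c : ℕ) ≤ b := Nat.lt_succ_iff.mp h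
        have hbd' : b ≤ (T0 d : ℕ) := Nat.le_of_succ_le hbd
        have hrow := ih hb' hab' hbd'
        -- all values between T0 c and T0 d are equal
        have hmono := seqOK_mono hg
        have e1 : g ⟨b, hb'⟩ = g ⟨b + 1, hb⟩ := by
          have l1 : g (T0 c) ≤ g ⟨b, hb'⟩ := hmono _ _ (by simp [Fin.le_def]; omega)
          have l2 : g ⟨b, hb'⟩ ≤ g ⟨b + 1, hb⟩ := (hg ⟨b, hb'⟩ ⟨b + 1, hb⟩ rfl).1
          have l3 : g ⟨b + 1, hb⟩ ≤ g (T0 d) := hmono _ _ (by simp [Fin.le_def]; omega)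
          rw [heq] at l1
          exact le_antisymm l2 (le_trans l3 l1)
        -- no descent at b+1
        have hnotdes : (b + 1 : ℕ) ∉ desSYT T0 := by
          intro hmem
          exact absurd ((hg ⟨b, hb'⟩ ⟨b + 1, hb⟩ rfl).2 (by simpa using hmem)) (by
            rw [e1]; exact lt_irrefl _)
        -- hence row of label b+1 ≤ row of label b
        have hstep : (((sytEquiv hT0).symm ⟨b + 1, hb⟩ : ↥lam.cells) : ℕ × ℕ).1 ≤
            (((sytEquiv hT0).symm ⟨b, hb'⟩ : ↥lam.cells) : ℕ × ℕ).1 := by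
          by_contra hcon
          push_neg at hcon
          apply hnotdes
          rw [desSYT, Finset.mem_filter]
          refine ⟨Finset.mem_range.mpr hb, (sytEquiv hT0).symm ⟨b, hb'⟩,
            (sytEquiv hT0).symm ⟨b + 1, hb⟩, ?_, ?_, hcon⟩
          · rw [T0_sytEquiv_symm hT0]
          · rw [T0_sytEquiv_symm hT0]
        exact le_trans hstep hrow
      · obtain hcb : (T0 c : ℕ) = b + 1 := le_antisymm hab h
        have h1 : (⟨b + 1, hb⟩ : Fin n) = T0 c := by
          rw [Fin.ext_iff, Fin.val_mk]; omega
        rw [h1, sytEquiv_symm_T0]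
  have := key (T0 d : ℕ) (T0 d).isLt hle le_rfl
  have h1 : (⟨(T0 d : ℕ), (T0 d).isLt⟩ : Fin n) = T0 d := Fin.ext rfl
  rw [h1, sytEquiv_symm_T0] at this
  exact this

/-- Columns strictly increase along a run of equal entries. -/
lemma col_lt_of_eq {T0 : ↥lam.cells → Fin n} (hT0 : IsSYT T0) {g : Fin n → Fin M}
    (hg : seqOK n M (desSYT T0) g) (c d : ↥lam.cells) (hlt : T0 c < T0 d)
    (heq : g (T0 c) = g (T0 d)) : (c : ℕ × ℕ).2 < (d : ℕ × ℕ).2 := by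
  by_contra hcol
  push_neg at hcol
  have hrow := row_le_of_eq hT0 hg c d hlt.le heq
  have hne : d ≠ c := by
    intro hdc
    rw [hdc] at hlt
    exact lt_irrefl _ hlt
  exact absurd (syt_lt_of_le_le hT0 c d hrow hcol hne) (not_lt.mpr hlt.le)

end AuxStd

/-- For a fixed standard Young tableau `T₀` of shape `λ ⊢ n`,
the sum of `X^T` over all semistandard Young tableaux `T` of shape `λ` (entries
in `[M]`) standardizing to `T₀` is `F_{Des(T₀)}(X)`. -/
theorem standardization_class_sum (M n : ℕ) (lam : YoungDiagram) (h : lam.card = n)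
    (T0 : ↥lam.cells → Fin n) (hT0 : IsSYT T0) :
    (∑ f ∈ Finset.univ.filter
        (fun f : ↥lam.cells → Fin M => IsSSYT f ∧ Standardizes f T0),
      ∏ c, X (f c)) = Fqsym M n (desSYT T0) := by
  classical
  rw [Fqsym]
  refine Finset.sum_nbij' (fun f => f ∘ (sytEquiv hT0).symm) (fun g => g ∘ T0)
    ?_ ?_ ?_ ?_ ?_
  · -- SSYT standardizing to T0 gives admissible sequence
    intro f hf
    simp only [Finset.mem_filter, Finset.mem_univ, true_and] at hf ⊢
    obtain ⟨hssyt, hstd⟩ := hf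
    intro i j hij
    set c := (sytEquiv hT0).symm i with hc
    set d := (sytEquiv hT0).symm j with hd
    have hTc : T0 c = i := T0_sytEquiv_symm hT0 i
    have hTd : T0 d = j := T0_sytEquiv_symm hT0 j
    have hcd : T0 c < T0 d := by
      rw [hTc, hTd, Fin.lt_def]; omega
    have h1 := (hstd c d).mp hcd
    constructor
    · rcases h1 with h | ⟨h, _⟩
      · exact h.le
      · exact h.le
    · intro hdes
      rw [desSYT, Finset.mem_filter] at hdes
      obtain ⟨-, c', d', hc'1, hd', hrowlt⟩ := hdes
      have hcc : c' = c := by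
        apply hT0.1.1
        rw [hTc]
        exact Fin.ext (by omega)
      have hdd : d' = d := by
        apply hT0.1.1
        rw [hTd]
        exact Fin.ext (by omega)
      rw [hcc, hdd] at hrowlt
      rcases h1 with h | ⟨h, hcol⟩
      · exact h
      · exact absurd (ssyt_lt hssyt c d hrowlt hcol.le)
          (by rw [h]; exact lt_irrefl _)
  · -- admissible sequence gives an SSYT standardizing to T0
    intro g hg
    simp only [Finset.mem_filter, Finset.mem_univ, true_and] at hg ⊢
    have hmono := seqOK_mono hg
    constructor
    · constructor
      · intro c d hrow hcol
        rcases lt_or_eq_of_le hcol with h | h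
        · rcases lt_trichotomy (T0 c) (T0 d) with h' | h' | h'
          · exact hmono _ _ h'.le
          · exact le_of_eq (congrArg g h')
          · exact absurd (hT0.2.1 c d hrow h) (not_lt.mpr h'.le)
        · have : c = d := Subtype.ext (Prod.ext hrow h)
          rw [this]
      · intro c d hcol hrow
        have hlt : T0 c < T0 d := hT0.2.2 c d hcol hrow
        have hle : g (T0 c) ≤ g (T0 d) := hmono _ _ hlt.le
        rcases lt_or_eq_of_le hle with h | h
        · exact h
        · exact absurd (row_le_of_eq hT0 hg c d hlt.le h) (not_le.mpr hrow)
    · intro c d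
      constructor
      · intro hlt
        have hle : g (T0 c) ≤ g (T0 d) := hmono _ _ hlt.le
        rcases lt_or_eq_of_le hle with h | h
        · exact Or.inl h
        · exact Or.inr ⟨h, col_lt_of_eq hT0 hg c d hlt h⟩
      · rintro (h | ⟨h, hcol⟩)
        · by_contra hnot
          push_neg at hnot
          exact absurd (hmono _ _ hnot) (not_le.mpr h)
        · rcases lt_trichotomy (T0 c) (T0 d) with h' | h' | h'
          · exact h'
          · exfalso
            have hcd : c = d := hT0.1.1 h'
            rw [hcd] at hcol
            exact lt_irrefl _ hcol
          · exact absurd (col_lt_of_eq hT0 hg d c h' h.symm) (by omega)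
  · intro f _
    funext c
    simp only [Function.comp_apply]
    rw [show T0 c = sytEquiv hT0 c from rfl, Equiv.symm_apply_apply]
  · intro g _
    funext i
    simp only [Function.comp_apply]
    rw [T0_sytEquiv_symm hT0]
  · intro f _
    exact (Equiv.prod_comp (sytEquiv hT0).symm (fun c => X (f c))).symm
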